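/- Assume the weight matrix ω is symmetric with ω_ii = 0 for all i, and let x : [0,∞) → ℝ^N be a solution of the autonomous Hopfield network. Then every limit point of the trajectory is an equilibrium: if t_n → ∞ and x(t_n) → p in ℝ^N, then u(p) = 0. Equivalently, the solution's velocity tends to zero, so the trajectory converges to the set of fixed points and no sustained oscillations are possible. -/

import Mathlib

/-! The energy `E(y) = ∑ᵢ G(yᵢ) - (g/2) ∑ᵢⱼ F(ωᵢⱼ) F(yᵢ) F(yⱼ)`, where `G' a = a F'(a)`, is a
Lyapunov function: since `ω` is symmetric, it decreases along a trajectory at the rate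
`Φ(y) = ∑ᵢ F'(yᵢ) uᵢ(y)² ≥ 0`, and it is bounded below because `F` is. The trajectory stays
bounded, so its speed is bounded. If `u(p) ≠ 0`, then `Φ > δ > 0` on a ball around `p`; every
return of the trajectory close to `p` keeps it in that ball for a fixed time `η`, during which the
energy drops by at least `δ η`. Infinitely many returns contradict the convergence of the energy. -/

open Real Filter

noncomputable def F (lam s : ℝ) : ℝ := (2 / Real.pi) * Real.arctan (lam * Real.pi * s / 2)

noncomputable def u (N : ℕ) (lam g : ℝ) (ω : Fin N → Fin N → ℝ) (x : Fin N → ℝ) (i : Fin N) : ℝ :=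
  -x i + g * ∑ j, F lam (ω i j) * F lam (x j)

open Set Topology NNReal

lemma antitoneOn_of_hasDerivAt_nonpos {f f' : ℝ → ℝ} {D : Set ℝ} (hD : Convex ℝ D)
    (hf : ∀ t ∈ D, HasDerivAt f (f' t) t) (hf' : ∀ t ∈ D, f' t ≤ 0) : AntitoneOn f D :=
  antitoneOn_of_hasDerivWithinAt_nonpos hD
    (fun t ht => (hf t ht).continuousAt.continuousWithinAt)
    (fun t ht => (hf t (interior_subset ht)).hasDerivWithinAt)
    (fun t ht => hf' t (interior_subset ht))

lemma Finset.sum_sum_mul_add_mul_of_symm {ι R : Type*} [Fintype ι] [CommSemiring R]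
    {A : ι → ι → R} (hA : ∀ i j, A i j = A j i) (a b : ι → R) :
    ∑ i, ∑ j, A i j * (a i * b j + b i * a j) = 2 * ∑ i, a i * ∑ j, A i j * b j := by
  have hswap : ∑ i, ∑ j, A i j * (b i * a j) = ∑ i, ∑ j, A i j * (a i * b j) := by
    rw [Finset.sum_comm]
    simp_rw [hA _ _, mul_comm (b _)]
  calc ∑ i, ∑ j, A i j * (a i * b j + b i * a j)
      = ∑ i, ∑ j, A i j * (a i * b j) + ∑ i, ∑ j, A i j * (b i * a j) := by
        simp_rw [mul_add, Finset.sum_add_distrib]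
    _ = 2 * ∑ i, a i * ∑ j, A i j * b j := by
        rw [hswap, ← two_mul]
        simp_rw [Finset.mul_sum, mul_left_comm (A _ _)]

lemma exists_tendsto_of_antitoneOn_Ici {V : ℝ → ℝ} {c : ℝ} (hV : AntitoneOn V (Ici 0))
    (hc : ∀ t ∈ Ici (0 : ℝ), c ≤ V t) : ∃ L, Tendsto V atTop (𝓝 L) := by
  have hanti : Antitone fun t => V (max t 0) := fun a b hab =>
    hV (le_max_right a 0) (le_max_right b 0) (max_le_max_right 0 hab)
  refine ⟨_, (tendsto_atTop_ciInf hanti ⟨c, ?_⟩).congr' ?_⟩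
  · rintro _ ⟨t, rfl⟩
    exact hc _ (le_max_right t 0)
  · filter_upwards [eventually_ge_atTop 0] with t ht
    rw [max_eq_left ht]

lemma le_max_of_hasDerivAt_neg_add {f b : ℝ → ℝ} {K : ℝ}
    (hf : ∀ t ∈ Ici (0 : ℝ), HasDerivAt f (-f t + b t) t) (hb : ∀ t ∈ Ici (0 : ℝ), b t ≤ K)
    {t : ℝ} (ht : 0 ≤ t) : f t ≤ max (f 0) K := by
  have hanti : AntitoneOn (fun s => exp s * (f s - K)) (Ici 0) :=
    antitoneOn_of_hasDerivAt_nonpos (convex_Ici 0)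
      (fun s hs => (hasDerivAt_exp s).mul ((hf s hs).sub_const K))
      (fun s hs => by nlinarith [exp_pos s, hb s hs])
  have hdecay : exp t * (f t - K) ≤ f 0 - K := by
    simpa using hanti self_mem_Ici ht ht
  have hexp : 1 ≤ exp t := one_le_exp ht
  rcases le_total (f 0) K with h | h
  · nlinarith [le_max_right (f 0) K]
  · nlinarith [le_max_left (f 0) K]

lemma abs_le_max_of_hasDerivAt_neg_add {f b : ℝ → ℝ} {K : ℝ}
    (hf : ∀ t ∈ Ici (0 : ℝ), HasDerivAt f (-f t + b t) t) (hb : ∀ t ∈ Ici (0 : ℝ), |b t| ≤ K)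
    {t : ℝ} (ht : 0 ≤ t) : |f t| ≤ max |f 0| K := by
  have hupper := le_max_of_hasDerivAt_neg_add hf (fun s hs => (le_abs_self _).trans (hb s hs)) ht
  have hlower := le_max_of_hasDerivAt_neg_add (f := -f) (b := -b)
    (fun s hs => ((hf s hs).neg).congr_deriv (by simp only [Pi.neg_apply]; ring))
    (fun s hs => (neg_le_abs _).trans (hb s hs)) ht
  simp only [Pi.neg_apply] at hlower
  exact abs_le.2 ⟨by linarith [max_le_max_right K (neg_le_abs (f 0))],
    hupper.trans (max_le_max_right K (le_abs_self _))⟩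

theorem nonpos_at_limit_point_of_lyapunov {E : Type*} [PseudoMetricSpace E] {x : ℝ → E}
    {V : ℝ → ℝ} {Φ : E → ℝ} {K : ℝ≥0} {c : ℝ} (hx : LipschitzOnWith K x (Ici 0))
    (hV : ∀ t ∈ Ici (0 : ℝ), HasDerivAt V (-Φ (x t)) t)
    (hΦ : ∀ t ∈ Ici (0 : ℝ), 0 ≤ Φ (x t)) (hc : ∀ t ∈ Ici (0 : ℝ), c ≤ V t)
    {tn : ℕ → ℝ} {p : E} (htn : Tendsto tn atTop atTop) (hp : Tendsto (x ∘ tn) atTop (𝓝 p))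
    (hΦp : ContinuousAt Φ p) : Φ p ≤ 0 := by
  by_contra! hpos
  set δ := Φ p / 2
  obtain ⟨L, hL⟩ := exists_tendsto_of_antitoneOn_Ici
    (antitoneOn_of_hasDerivAt_nonpos (convex_Ici 0) hV fun t ht => neg_nonpos.2 (hΦ t ht)) hc
  obtain ⟨ε, hε, hnear⟩ : ∃ ε > 0, ∀ y, dist y p < ε → δ < Φ y :=
    Metric.eventually_nhds_iff.1 (hΦp.eventually (lt_mem_nhds (half_lt_self hpos)))
  set η := ε / (2 * (K + 1))
  have hη : 0 < η := by positivity
  have hKη : K * η ≤ ε / 2 := by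
    calc (K : ℝ) * η ≤ (K + 1) * η := by gcongr; linarith
      _ = ε / 2 := by simp only [η]; field_simp
  -- near `p` the energy drops at rate at least `δ`, and the trajectory stays near `p` for time `η`
  have hdescent : ∀ a ∈ Ici (0 : ℝ), dist (x a) p < ε / 2 → V (a + η) - V a ≤ -(δ * η) := by
    intro a ha hdist
    have hle : a ≤ a + η := le_add_of_nonneg_right hη.le
    have hanti : AntitoneOn (fun s => V s + δ * s) (Icc a (a + η)) := by
      refine antitoneOn_of_hasDerivAt_nonpos (convex_Icc _ _)
        (fun s hs => (hV s (ha.trans hs.1)).add ((hasDerivAt_id s).const_mul δ)) fun s hs => ?_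
      have hclose : dist (x s) p < ε := calc
        dist (x s) p ≤ dist (x s) (x a) + dist (x a) p := dist_triangle _ _ _
        _ ≤ K * dist s a + dist (x a) p := by
          gcongr
          exact hx.dist_le_mul s (mem_Ici.2 (ha.trans hs.1)) a ha
        _ < ε / 2 + ε / 2 := by
          have hsa : dist s a ≤ η := by
            rw [Real.dist_eq, abs_of_nonneg (by linarith [hs.1])]
            linarith [hs.2]
          nlinarith [mul_le_mul_of_nonneg_left hsa K.coe_nonneg]
        _ = ε := add_halves ε
      have := hnear _ hclose
      simp only [mul_one]
      linarith
    have := hanti (left_mem_Icc.2 hle) (right_mem_Icc.2 hle) hle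
    simp only at this
    linarith
  have hlim : Tendsto (fun n => V (tn n + η) - V (tn n)) atTop (𝓝 (L - L)) :=
    (hL.comp (tendsto_atTop_add_const_right _ η htn)).sub (hL.comp htn)
  have hdrop : ∀ᶠ n in atTop, V (tn n + η) - V (tn n) ≤ -(δ * η) := by
    filter_upwards [htn.eventually_ge_atTop 0, hp (Metric.ball_mem_nhds p (half_pos hε))]
      with n h0 hn using hdescent _ h0 hn
  have := le_of_tendsto hlim hdrop
  have : 0 < δ * η := by positivity
  linarith

lemma abs_F_le_one (lam s : ℝ) : |F lam s| ≤ 1 := by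
  have harctan : |arctan (lam * π * s / 2)| ≤ π / 2 :=
    abs_le.2 ⟨(neg_pi_div_two_lt_arctan _).le, (arctan_lt_pi_div_two _).le⟩
  rw [F, abs_mul, abs_of_pos (by positivity : (0 : ℝ) < 2 / π)]
  calc 2 / π * |arctan (lam * π * s / 2)| ≤ 2 / π * (π / 2) := by gcongr
    _ = 1 := by field_simp

lemma continuous_F (lam : ℝ) : Continuous (F lam) := by
  unfold F; fun_prop

noncomputable def F' (lam s : ℝ) : ℝ := lam / (1 + (lam * π * s / 2) ^ 2)

lemma F'_pos {lam : ℝ} (hlam : 0 < lam) (s : ℝ) : 0 < F' lam s := by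
  unfold F'; positivity

lemma continuous_F' (lam : ℝ) : Continuous (F' lam) := by
  unfold F'
  exact continuous_const.div (by fun_prop) fun s => by positivity

lemma hasDerivAt_F (lam s : ℝ) : HasDerivAt (F lam) (F' lam s) s := by
  have hlin : HasDerivAt (fun s : ℝ => lam * π * s / 2) (lam * π / 2) s := by
    simpa using ((hasDerivAt_id s).const_mul (lam * π)).div_const 2
  refine (((hasDerivAt_arctan _).comp s hlin).const_mul (2 / π)).congr_deriv ?_
  have : 1 + (lam * π * s / 2) ^ 2 ≠ 0 := by positivity
  rw [F']
  field_simp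

noncomputable def G (lam a : ℝ) : ℝ := 2 / (lam * π ^ 2) * log (1 + (lam * π * a / 2) ^ 2)

lemma hasDerivAt_G {lam : ℝ} (hlam : lam ≠ 0) (a : ℝ) : HasDerivAt (G lam) (a * F' lam a) a := by
  have hq : (0 : ℝ) < 1 + (lam * π * a / 2) ^ 2 := by positivity
  have hlin : HasDerivAt (fun a : ℝ => lam * π * a / 2) (lam * π / 2) a := by
    simpa using ((hasDerivAt_id a).const_mul (lam * π)).div_const 2
  refine ((((hlin.fun_pow 2).const_add 1).log hq.ne').const_mul (2 / (lam * π ^ 2))).congr_deriv ?_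
  rw [F']
  field_simp
  ring

lemma G_nonneg {lam : ℝ} (hlam : 0 < lam) (a : ℝ) : 0 ≤ G lam a := by
  have : 0 ≤ log (1 + (lam * π * a / 2) ^ 2) := log_nonneg (by nlinarith)
  unfold G; positivity

section Hopfield

variable {N : ℕ} {lam g : ℝ} {ω : Fin N → Fin N → ℝ}

lemma u_add_self (y : Fin N → ℝ) (i : Fin N) :
    u N lam g ω y i + y i = g * ∑ j, F lam (ω i j) * F lam (y j) := by
  rw [u]; ring

lemma abs_u_add_self_le (y : Fin N → ℝ) (i : Fin N) : |u N lam g ω y i + y i| ≤ |g| * N := by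
  rw [u_add_self, abs_mul]
  gcongr
  calc |∑ j, F lam (ω i j) * F lam (y j)| ≤ ∑ j, |F lam (ω i j) * F lam (y j)| :=
        Finset.abs_sum_le_sum_abs _ _
    _ ≤ ∑ _j : Fin N, (1 : ℝ) := Finset.sum_le_sum fun j _ => by
        rw [abs_mul]
        exact mul_le_one₀ (abs_F_le_one _ _) (abs_nonneg _) (abs_F_le_one _ _)
    _ = N := by simp

lemma continuous_u (i : Fin N) : Continuous fun y => u N lam g ω y i := by
  have := continuous_F lam
  unfold u; fun_prop

variable (N lam g ω) in
noncomputable def hopfieldEnergy (y : Fin N → ℝ) : ℝ :=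
  ∑ i, G lam (y i) - g / 2 * ∑ i, ∑ j, F lam (ω i j) * (F lam (y i) * F lam (y j))

variable (N lam g ω) in
noncomputable def hopfieldDissipation (y : Fin N → ℝ) : ℝ :=
  ∑ i, F' lam (y i) * u N lam g ω y i ^ 2

lemma abs_sum_sum_F_mul_le (y : Fin N → ℝ) :
    |∑ i, ∑ j, F lam (ω i j) * (F lam (y i) * F lam (y j))| ≤ N ^ 2 := calc
  _ ≤ ∑ i, ∑ j, |F lam (ω i j) * (F lam (y i) * F lam (y j))| :=
      (Finset.abs_sum_le_sum_abs _ _).trans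
        (Finset.sum_le_sum fun i _ => Finset.abs_sum_le_sum_abs _ _)
  _ ≤ ∑ _i : Fin N, ∑ _j : Fin N, (1 : ℝ) := by
      gcongr with i _ j _
      simp only [abs_mul]
      exact mul_le_one₀ (abs_F_le_one _ _) (by positivity)
        (mul_le_one₀ (abs_F_le_one _ _) (abs_nonneg _) (abs_F_le_one _ _))
  _ = N ^ 2 := by simp [sq]

lemma neg_le_hopfieldEnergy (hlam : 0 < lam) (y : Fin N → ℝ) :
    -(|g| / 2 * N ^ 2) ≤ hopfieldEnergy N lam g ω y := by
  have hG : 0 ≤ ∑ i, G lam (y i) := Finset.sum_nonneg fun _ _ => G_nonneg hlam _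
  have hquad : g / 2 * ∑ i, ∑ j, F lam (ω i j) * (F lam (y i) * F lam (y j)) ≤ |g| / 2 * N ^ 2 :=
    calc _ ≤ |g / 2 * ∑ i, ∑ j, F lam (ω i j) * (F lam (y i) * F lam (y j))| := le_abs_self _
      _ = |g| / 2 * |∑ i, ∑ j, F lam (ω i j) * (F lam (y i) * F lam (y j))| := by
        rw [abs_mul, abs_div, abs_two]
      _ ≤ |g| / 2 * N ^ 2 := by gcongr; exact abs_sum_sum_F_mul_le y
  unfold hopfieldEnergy
  linarith

lemma hopfieldDissipation_nonneg (hlam : 0 < lam) (y : Fin N → ℝ) :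
    0 ≤ hopfieldDissipation N lam g ω y :=
  Finset.sum_nonneg fun _ _ => mul_nonneg (F'_pos hlam _).le (sq_nonneg _)

lemma u_eq_zero_of_hopfieldDissipation_nonpos (hlam : 0 < lam) {y : Fin N → ℝ}
    (hy : hopfieldDissipation N lam g ω y ≤ 0) (i : Fin N) : u N lam g ω y i = 0 := by
  have hterms := (Finset.sum_eq_zero_iff_of_nonneg fun j _ =>
    mul_nonneg (F'_pos hlam (y j)).le (sq_nonneg (u N lam g ω y j))).1
    (hy.antisymm (hopfieldDissipation_nonneg hlam y))
  exact pow_eq_zero_iff two_ne_zero |>.1 <|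
    (mul_eq_zero.1 (hterms i (Finset.mem_univ i))).resolve_left (F'_pos hlam _).ne'

lemma continuous_hopfieldDissipation : Continuous (hopfieldDissipation N lam g ω) := by
  have := continuous_F' lam
  have := continuous_u (lam := lam) (g := g) (ω := ω)
  unfold hopfieldDissipation; fun_prop

-- Symmetry of `ω` makes `∂ᵢE(y) = F'(yᵢ) (yᵢ - (u + y)ᵢ) = -F'(yᵢ) uᵢ(y)`.
lemma hasDerivAt_hopfieldEnergy_comp (hlam : lam ≠ 0) (hsym : ∀ i j, ω i j = ω j i)
    {x : ℝ → Fin N → ℝ} {v : Fin N → ℝ} {t : ℝ} (hx : ∀ i, HasDerivAt (fun s => x s i) (v i) t) :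
    HasDerivAt (fun s => hopfieldEnergy N lam g ω (x s))
      (-∑ i, F' lam (x t i) * u N lam g ω (x t) i * v i) t := by
  have hF i : HasDerivAt (fun s => F lam (x s i)) (F' lam (x t i) * v i) t :=
    (hasDerivAt_F lam _).comp t (hx i)
  have hG := HasDerivAt.fun_sum fun i (_ : i ∈ Finset.univ) =>
    (hasDerivAt_G hlam (x t i)).comp t (hx i)
  have hquad := HasDerivAt.fun_sum fun i (_ : i ∈ Finset.univ) =>
    HasDerivAt.fun_sum fun j (_ : j ∈ Finset.univ) => ((hF i).mul (hF j)).const_mul (F lam (ω i j))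
  refine (hG.sub (hquad.const_mul (g / 2))).congr_deriv ?_
  rw [Finset.sum_sum_mul_add_mul_of_symm (fun i j => by rw [hsym]), Finset.mul_sum,
    Finset.mul_sum, ← Finset.sum_sub_distrib, ← Finset.sum_neg_distrib]
  refine Finset.sum_congr rfl fun i _ => ?_
  linear_combination F' lam (x t i) * v i * u_add_self (lam := lam) (g := g) (ω := ω) (x t) i

variable {x : ℝ → Fin N → ℝ}
  (hsol : ∀ t ≥ (0 : ℝ), ∀ i, HasDerivAt (fun s => x s i) (u N lam g ω (x t) i) t)
include hsol

lemma abs_le_max_of_hopfield_solution {t : ℝ} (ht : 0 ≤ t) (i : Fin N) :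
    |x t i| ≤ max |x 0 i| (|g| * N) :=
  abs_le_max_of_hasDerivAt_neg_add (b := fun s => u N lam g ω (x s) i + x s i)
    (fun s hs => (hsol s hs i).congr_deriv (by ring)) (fun _ _ => abs_u_add_self_le _ _) ht

lemma exists_lipschitzOnWith_of_hopfield_solution : ∃ K, LipschitzOnWith K x (Ici 0) := by
  set C := max ‖x 0‖ (|g| * N) + |g| * N
  have hC : 0 ≤ C := by positivity
  refine ⟨C.toNNReal, (convex_Ici 0).lipschitzOnWith_of_nnnorm_hasDerivWithin_le
    (fun t ht => (hasDerivAt_pi.2 (hsol t ht)).hasDerivWithinAt) fun t ht => ?_⟩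
  rw [← NNReal.coe_le_coe, coe_nnnorm, Real.coe_toNNReal _ hC, pi_norm_le_iff_of_nonneg hC]
  intro i
  calc ‖u N lam g ω (x t) i‖ ≤ |u N lam g ω (x t) i + x t i| + |x t i| := by
        rw [Real.norm_eq_abs]
        simpa using abs_sub (u N lam g ω (x t) i + x t i) (x t i)
    _ ≤ |g| * N + max ‖x 0‖ (|g| * N) := by
        gcongr
        · exact abs_u_add_self_le _ _
        · exact (abs_le_max_of_hopfield_solution hsol ht i).trans
            (max_le_max_right _ (norm_le_pi_norm (x 0) i))
    _ = C := add_comm _ _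

lemma hasDerivAt_hopfieldEnergy_of_solution (hlam : lam ≠ 0) (hsym : ∀ i j, ω i j = ω j i)
    {t : ℝ} (ht : 0 ≤ t) :
    HasDerivAt (fun s => hopfieldEnergy N lam g ω (x s)) (-hopfieldDissipation N lam g ω (x t)) t :=
  (hasDerivAt_hopfieldEnergy_comp hlam hsym (hsol t ht)).congr_deriv <| by
    simp only [hopfieldDissipation, sq, mul_assoc]

end Hopfield

theorem hopfield_limit_points_are_equilibria_general (N : ℕ) (lam g : ℝ)
    (hlam : 0 < lam) (ω : Fin N → Fin N → ℝ)
    (hsym : ∀ i j, ω i j = ω j i)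
    (x : ℝ → Fin N → ℝ)
    (hsol : ∀ t ≥ (0 : ℝ), ∀ i, HasDerivAt (fun s => x s i) (u N lam g ω (x t) i) t) :
    ∀ (tn : ℕ → ℝ) (p : Fin N → ℝ),
      (∀ n, 0 ≤ tn n) → Tendsto tn atTop atTop →
      Tendsto (fun n => x (tn n)) atTop (nhds p) →
      ∀ i, u N lam g ω p i = 0 := by
  intro tn p _ htn hp
  obtain ⟨K, hK⟩ := exists_lipschitzOnWith_of_hopfield_solution hsol
  refine u_eq_zero_of_hopfieldDissipation_nonpos hlam ?_
  exact nonpos_at_limit_point_of_lyapunov hK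
    (fun t ht => hasDerivAt_hopfieldEnergy_of_solution hsol hlam.ne' hsym ht)
    (fun t _ => hopfieldDissipation_nonneg hlam (x t))
    (fun t _ => neg_le_hopfieldEnergy hlam (x t)) htn hp
    continuous_hopfieldDissipation.continuousAt

/-- For symmetric ω with zero diagonal, every limit point of a trajectory
of the autonomous Hopfield network is an equilibrium: if t_n → ∞ and x(t_n) → p,
then u(p) = 0. -/
theorem hopfield_limit_points_are_equilibria (N : ℕ) (hN : 2 ≤ N) (lam g : ℝ)
    (hlam : 0 < lam) (hg : 0 < g) (ω : Fin N → Fin N → ℝ)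
    (hsym : ∀ i j, ω i j = ω j i) (hdiag : ∀ i, ω i i = 0)
    (x : ℝ → Fin N → ℝ)
    (hsol : ∀ t ≥ (0 : ℝ), ∀ i, HasDerivAt (fun s => x s i) (u N lam g ω (x t) i) t) :
    ∀ (tn : ℕ → ℝ) (p : Fin N → ℝ),
      (∀ n, 0 ≤ tn n) → Tendsto tn atTop atTop →
      Tendsto (fun n => x (tn n)) atTop (nhds p) →
      ∀ i, u N lam g ω p i = 0 :=
  hopfield_limit_points_are_equilibria_general N lam g hlam ω hsym x hsol
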